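/- arXiv:1310.1729 — 3 statements merged into one kernel-verified Lean document; each statement's English description precedes it below -/
import Mathlib

section
/- Let m ≥ 1 and let Q be an m×m real matrix with zero row sums (i.e. Σ_k Q_{jk} = 0 for every j). Define the (m−1)×(m−1) real matrix C by C_{ij} = Q_{ji} − Q_{mi} for i,j ∈ {1,...,m−1}. Then the characteristic polynomial of Q equals X times the characteristic polynomial of C. -/
open Matrix Polynomial

theorem charpoly_transpose' {m : Type*} [Fintype m] [DecidableEq m]
    {R : Type*} [CommRing R] (M : Matrix m m R) : M.transpose.charpoly = M.charpoly := by
  have h : charmatrix M.transpose = (charmatrix M).transpose := by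
    refine Matrix.ext fun i j => ?_
    rcases eq_or_ne i j with rfl | h
    · simp [Matrix.charmatrix_apply_eq]
    · simp [Matrix.transpose_apply, Matrix.charmatrix_apply_ne _ _ _ h,
        Matrix.charmatrix_apply_ne _ _ _ (Ne.symm h)]
  rw [Matrix.charpoly, h, Matrix.det_transpose, Matrix.charpoly]

theorem charpoly_conj' {m : Type*} [Fintype m] [DecidableEq m]
    {R : Type*} [CommRing R] (S S' A : Matrix m m R)
    (h1 : S * S' = 1) (h2 : S' * S = 1) :
    (S * A * S').charpoly = A.charpoly := by
  have key : charmatrix (S * A * S') =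
      (S.map Polynomial.C) * charmatrix A * (S'.map Polynomial.C) := by
    rw [charmatrix, charmatrix, Matrix.mul_sub, Matrix.sub_mul]
    congr 1
    · rw [← (Matrix.scalar_commute Polynomial.X (fun r' => Commute.all _ _)
        (S.map Polynomial.C)).eq, mul_assoc, ← Matrix.map_mul, h1,
        Matrix.map_one _ (by simp) (by simp), mul_one]
    · rw [RingHom.mapMatrix_apply, RingHom.mapMatrix_apply, Matrix.map_mul, Matrix.map_mul]
  rw [Matrix.charpoly, key, Matrix.det_mul, Matrix.det_mul, mul_comm, ← mul_assoc,
    ← Matrix.det_mul, ← Matrix.map_mul, h2, Matrix.map_one _ (by simp) (by simp),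
    Matrix.det_one, one_mul, Matrix.charpoly]

/-- **Characteristic-polynomial factorization from the proof of Proposition 4.3.**
If `Q` is an `m×m` real matrix (`m = n+1 ≥ 1`) with zero row sums, and `C` is the
`(m−1)×(m−1)` matrix with `C i j = Q j i − Q m i`, then
`charpoly Q = X * charpoly C`. -/
theorem charpoly_factorization
    (n : ℕ) (Q : Matrix (Fin (n + 1)) (Fin (n + 1)) ℝ)
    (hQrow : ∀ i, ∑ j, Q i j = 0)
    (C : Matrix (Fin n) (Fin n) ℝ)
    (hC : ∀ i j : Fin n,
      C i j = Q j.castSucc i.castSucc - Q (Fin.last n) i.castSucc) :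
    Q.charpoly = Polynomial.X * C.charpoly := by
  set A : Matrix (Fin n ⊕ Fin 1) (Fin n ⊕ Fin 1) ℝ :=
    (reindex finSumFinEquiv.symm finSumFinEquiv.symm) Q.transpose with hA
  have hAcp : A.charpoly = Q.charpoly := by
    rw [hA, Matrix.charpoly_reindex, charpoly_transpose']
  set w : Matrix (Fin 1) (Fin n) ℝ := Matrix.of fun _ _ => 1 with hw
  set S : Matrix (Fin n ⊕ Fin 1) (Fin n ⊕ Fin 1) ℝ := Matrix.fromBlocks 1 0 w 1 with hS
  set S' : Matrix (Fin n ⊕ Fin 1) (Fin n ⊕ Fin 1) ℝ := Matrix.fromBlocks 1 0 (-w) 1 with hS'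
  have h1 : S * S' = 1 := by
    rw [hS, hS', Matrix.fromBlocks_multiply]
    simp [Matrix.fromBlocks_one]
  have h2 : S' * S = 1 := by
    rw [hS, hS', Matrix.fromBlocks_multiply]
    simp [Matrix.fromBlocks_one]
  have hEl : ∀ i : Fin n, finSumFinEquiv (Sum.inl i) = (i.castSucc : Fin (n+1)) := by
    intro i; rfl
  have hEr : finSumFinEquiv (Sum.inr (0 : Fin 1)) = Fin.last n := by
    apply Fin.ext; simp
  have hAentry : ∀ i j, A i j = Q (finSumFinEquiv j) (finSumFinEquiv i) := by
    intro i j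
    rw [hA]
    simp [Matrix.reindex_apply, Matrix.submatrix_apply]
  set v : Matrix (Fin n) (Fin 1) ℝ := Matrix.of fun i _ => Q (Fin.last n) i.castSucc with hv
  have hcol : ∀ j : Fin n ⊕ Fin 1,
      (∑ i : Fin n, A (Sum.inl i) j) + A (Sum.inr 0) j = 0 := by
    intro j
    have h := hQrow (finSumFinEquiv j)
    rw [Fin.sum_univ_castSucc] at h
    rw [show A (Sum.inr 0) j = Q (finSumFinEquiv j) (Fin.last n) from by rw [hAentry, hEr],
      show (∑ i : Fin n, A (Sum.inl i) j) = ∑ i : Fin n, Q (finSumFinEquiv j) i.castSucc from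
        Finset.sum_congr rfl fun i _ => by rw [hAentry, hEl]]
    exact h
  have hb1 : A.toBlocks₂₁ = -(w * A.toBlocks₁₁) := by
    ext a b
    have ha : a = 0 := Subsingleton.elim a 0
    subst ha
    have h := hcol (Sum.inl b)
    simp only [Matrix.toBlocks₂₁, Matrix.toBlocks₁₁, Matrix.mul_apply, hw,
      Matrix.of_apply, one_mul, Matrix.neg_apply]
    linarith
  have hb2 : A.toBlocks₂₂ = -(w * A.toBlocks₁₂) := by
    ext a b
    have ha : a = 0 := Subsingleton.elim a 0
    have hb : b = 0 := Subsingleton.elim b 0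
    subst ha; subst hb
    have h := hcol (Sum.inr 0)
    simp only [Matrix.toBlocks₂₂, Matrix.toBlocks₁₂, Matrix.mul_apply, hw,
      Matrix.of_apply, one_mul, Matrix.neg_apply]
    linarith
  have hE : A.toBlocks₁₁ + -(A.toBlocks₁₂ * w) = C := by
    ext i j
    simp only [Matrix.add_apply, Matrix.neg_apply, Matrix.toBlocks₁₁, Matrix.toBlocks₁₂,
      Matrix.mul_apply, hw, Matrix.of_apply, mul_one, Fin.sum_univ_one]
    rw [hAentry, hAentry, hEl, hEl, hEr, hC]
    ring
  have hF : A.toBlocks₁₂ = v := by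
    ext i a
    have ha : a = 0 := Subsingleton.elim a 0
    subst ha
    simp only [Matrix.toBlocks₁₂, Matrix.of_apply, hv]
    rw [hAentry, hEl, hEr]
  have hB : S * A * S' = Matrix.fromBlocks C v 0 0 := by
    rw [hS, hS']
    conv_lhs => rw [← A.fromBlocks_toBlocks]
    rw [Matrix.fromBlocks_multiply, Matrix.fromBlocks_multiply, hb1, hb2]
    simp only [one_mul, zero_mul, mul_one, mul_zero, add_zero, zero_add, neg_zero,
      Matrix.mul_neg, Matrix.neg_mul, add_neg_cancel, neg_add_cancel,
      Matrix.zero_mul, Matrix.mul_zero, Matrix.one_mul, Matrix.mul_one]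
    rw [hE, hF]
  have hX : (0 : Matrix (Fin 1) (Fin 1) ℝ).charpoly = Polynomial.X := by
    rw [Matrix.charpoly, Matrix.det_fin_one]
    simp [charmatrix]
  calc Q.charpoly = A.charpoly := hAcp.symm
    _ = (S * A * S').charpoly := (charpoly_conj' S S' A h1 h2).symm
    _ = (Matrix.fromBlocks C v 0 0).charpoly := by rw [hB]
    _ = C.charpoly * (0 : Matrix (Fin 1) (Fin 1) ℝ).charpoly := by
        rw [Matrix.charpoly_fromBlocks_zero₂₁]
    _ = Polynomial.X * C.charpoly := by rw [hX, mul_comm]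
end

section
/- Let m ≥ 1, θ ∈ ℝ, δ > 0, and let p : (θ−δ, θ+δ) → ℝ^m be such that for every ξ in this interval p_l(ξ) > 0 for all l and Σ_{l=1}^m p_l(ξ) = 1, and each coordinate ξ ↦ p_l(ξ) is differentiable at θ. For ξ ∈ (θ−δ,θ+δ) set A_l(ξ) = Σ_{n=1}^l p_n(ξ) and define F_ξ : (0,1) → {1,...,m} by F_ξ(u) = min{ l : u ≤ A_l(ξ) }. Then for all i ≠ j in {1,...,m}, the limit lim_{h→0⁺} (1/h) · Leb({ u ∈ (0,1) : F_θ(u) = i and F_{θ+h}(u) = j }) exists and is at most Σ_{l=1}^m | p_l'(θ) |. -/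
open Filter MeasureTheory Topology

section Aux

variable {m : ℕ} (p : ℝ → Fin m → ℝ)

/-- partial sum `A_l(ξ) = ∑_{n ≤ l} p_n(ξ)` -/
private def cdfA (ξ : ℝ) (l : Fin m) : ℝ := ∑ k ∈ Finset.Iic l, p ξ k

/-- partial sum `B_l(ξ) = ∑_{n < l} p_n(ξ)` -/
private def cdfB (ξ : ℝ) (l : Fin m) : ℝ := ∑ k ∈ Finset.Iio l, p ξ k

private lemma cdfA_eq (ξ : ℝ) (l : Fin m) : cdfA p ξ l = cdfB p ξ l + p ξ l := by
  rw [cdfA, cdfB, ← Finset.Iio_insert, Finset.sum_insert (by simp), add_comm]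

end Aux

/-- **Decoupling estimate (Lemma 4.6).**  Let `p ξ` be a strictly positive
probability vector on `{1,…,m}` for `ξ` in `(θ−δ, θ+δ)`, differentiable at `θ`
with derivative `p'`, and let `F ξ u = min { l : u ≤ A_l(ξ) }` with
`A_l(ξ) = Σ_{n ≤ l} p_n(ξ)` be the inverse-CDF sampling map.  Then for `i ≠ j`,
`(1/h)·Leb{ u ∈ (0,1) : F θ u = i, F (θ+h) u = j }` has a limit as `h → 0⁺`,
and the limit is at most `Σ_l |p'_l|`. -/
theorem inverse_cdf_decoupling
    (m : ℕ) (hm : 1 ≤ m) (θ δ : ℝ) (hδ : 0 < δ)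
    (p : ℝ → Fin m → ℝ) (p' : Fin m → ℝ)
    (hpos : ∀ ξ ∈ Set.Ioo (θ - δ) (θ + δ), ∀ l, 0 < p ξ l)
    (hsum : ∀ ξ ∈ Set.Ioo (θ - δ) (θ + δ), ∑ l, p ξ l = 1)
    (hderiv : ∀ l, HasDerivAt (fun ξ => p ξ l) (p' l) θ)
    (F : ℝ → ℝ → Fin m)
    (hF : ∀ ξ ∈ Set.Ioo (θ - δ) (θ + δ), ∀ u ∈ Set.Ioo (0:ℝ) 1,
      (u ≤ ∑ k ∈ Finset.Iic (F ξ u), p ξ k) ∧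
      ∀ l : Fin m, u ≤ ∑ k ∈ Finset.Iic l, p ξ k → F ξ u ≤ l) :
    ∀ i j : Fin m, i ≠ j → ∃ L : ℝ,
      Tendsto (fun h : ℝ =>
          (volume {u : ℝ | u ∈ Set.Ioo (0:ℝ) 1 ∧
            F θ u = i ∧ F (θ + h) u = j}).toReal / h)
        (nhdsWithin 0 (Set.Ioi 0)) (nhds L) ∧
      L ≤ ∑ l, |p' l| := by
  intro i j hij
  have hθI : θ ∈ Set.Ioo (θ - δ) (θ + δ) := by constructor <;> linarith
  have hξI : ∀ h : ℝ, h ∈ Set.Ioo (0:ℝ) δ → θ + h ∈ Set.Ioo (θ - δ) (θ + δ) := by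
    intro h hh
    obtain ⟨h1, h2⟩ := hh
    constructor <;> linarith
  -- basic facts about the partial sums
  have hBnn : ∀ ξ ∈ Set.Ioo (θ - δ) (θ + δ), ∀ l, 0 ≤ cdfB p ξ l := fun ξ hξ l =>
    Finset.sum_nonneg fun k _ => (hpos ξ hξ k).le
  have hA1 : ∀ ξ ∈ Set.Ioo (θ - δ) (θ + δ), ∀ l, cdfA p ξ l ≤ 1 := by
    intro ξ hξ l
    rw [← hsum ξ hξ, cdfA]
    exact Finset.sum_le_sum_of_subset_of_nonneg (Finset.subset_univ _)
      (fun k _ _ => (hpos ξ hξ k).le)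
  have hAltB : ∀ ξ ∈ Set.Ioo (θ - δ) (θ + δ), ∀ k l : Fin m, k < l →
      cdfA p ξ k ≤ cdfB p ξ l := by
    intro ξ hξ k l hkl
    rw [cdfA, cdfB]
    apply Finset.sum_le_sum_of_subset_of_nonneg
    · intro x hx
      simp only [Finset.mem_Iic] at hx
      simp only [Finset.mem_Iio]
      exact lt_of_le_of_lt hx hkl
    · exact fun x _ _ => (hpos ξ hξ x).le
  have hBA : ∀ ξ ∈ Set.Ioo (θ - δ) (θ + δ), ∀ l, cdfB p ξ l < cdfA p ξ l := by
    intro ξ hξ l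
    have := hpos ξ hξ l
    rw [cdfA_eq]
    linarith
  -- characterization of `F ξ u = l`
  have hchar : ∀ ξ ∈ Set.Ioo (θ - δ) (θ + δ), ∀ u ∈ Set.Ioo (0:ℝ) 1, ∀ l : Fin m,
      F ξ u = l ↔ (cdfB p ξ l < u ∧ u ≤ cdfA p ξ l) := by
    intro ξ hξ u hu l
    obtain ⟨h1, h2⟩ := hF ξ hξ u hu
    constructor
    · rintro rfl
      refine ⟨?_, h1⟩
      by_contra hc
      push_neg at hc
      rcases Nat.eq_zero_or_pos (F ξ u).val with h0 | h0
      · have he : Finset.Iio (F ξ u) = ∅ := by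
          ext k
          simp only [Finset.mem_Iio, Fin.lt_def, h0, Finset.notMem_empty, iff_false]
          omega
        rw [cdfB, he] at hc
        simp only [Finset.sum_empty] at hc
        linarith [hu.1]
      · set l' : Fin m := ⟨(F ξ u).val - 1,
          lt_of_le_of_lt (Nat.sub_le _ _) (F ξ u).isLt⟩ with hl'
        have hIio : Finset.Iio (F ξ u) = Finset.Iic l' := by
          ext k
          simp only [Finset.mem_Iio, Finset.mem_Iic, Fin.lt_def, Fin.le_def, hl']
          omega
        have hle := h2 l' (by rw [cdfB, hIio] at hc; exact hc)
        rw [Fin.le_def] at hle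
        simp only [hl'] at hle
        omega
    · rintro ⟨hb, ha⟩
      have hle : F ξ u ≤ l := h2 l (by rw [cdfA] at ha; exact ha)
      rcases lt_or_eq_of_le hle with hlt | he
      · have : u ≤ cdfB p ξ l := le_trans (by rw [cdfA]; exact h1) (hAltB ξ hξ _ _ hlt)
        linarith
      · exact he
  -- the measure formula
  have hmeas : ∀ h ∈ Set.Ioo (0:ℝ) δ,
      (volume {u : ℝ | u ∈ Set.Ioo (0:ℝ) 1 ∧ F θ u = i ∧ F (θ + h) u = j}).toReal
        = max (min (cdfA p θ i) (cdfA p (θ + h) j)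
            - max (cdfB p θ i) (cdfB p (θ + h) j)) 0 := by
    intro h hh
    have hI' := hξI h hh
    set N := min (cdfA p θ i) (cdfA p (θ + h) j) with hN
    set M := max (cdfB p θ i) (cdfB p (θ + h) j) with hM
    have hsub1 : {u : ℝ | u ∈ Set.Ioo (0:ℝ) 1 ∧ F θ u = i ∧ F (θ + h) u = j}
        ⊆ Set.Ioc M N := by
      rintro u ⟨hu, hFi, hFj⟩
      obtain ⟨hbi, hai⟩ := (hchar θ hθI u hu i).1 hFi
      obtain ⟨hbj, haj⟩ := (hchar (θ + h) hI' u hu j).1 hFj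
      exact ⟨max_lt hbi hbj, le_min hai haj⟩
    have hsub2 : Set.Ioo M N
        ⊆ {u : ℝ | u ∈ Set.Ioo (0:ℝ) 1 ∧ F θ u = i ∧ F (θ + h) u = j} := by
      rintro u ⟨hMu, huN⟩
      have h0u : 0 < u := lt_of_le_of_lt (le_trans (hBnn θ hθI i) (le_max_left _ _)) hMu
      have hu1 : u < 1 :=
        lt_of_lt_of_le huN (le_trans (min_le_left _ _) (hA1 θ hθI i))
      have hu : u ∈ Set.Ioo (0:ℝ) 1 := ⟨h0u, hu1⟩
      refine ⟨hu, ?_, ?_⟩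
      · exact (hchar θ hθI u hu i).2
          ⟨lt_of_le_of_lt (le_max_left _ _) hMu, le_of_lt (lt_of_lt_of_le huN (min_le_left _ _))⟩
      · exact (hchar (θ + h) hI' u hu j).2
          ⟨lt_of_le_of_lt (le_max_right _ _) hMu, le_of_lt (lt_of_lt_of_le huN (min_le_right _ _))⟩
    have hv : volume {u : ℝ | u ∈ Set.Ioo (0:ℝ) 1 ∧ F θ u = i ∧ F (θ + h) u = j}
        = ENNReal.ofReal (N - M) := by
      refine le_antisymm ?_ ?_
      · calc volume _ ≤ volume (Set.Ioc M N) := measure_mono hsub1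
          _ = ENNReal.ofReal (N - M) := Real.volume_Ioc
      · calc ENNReal.ofReal (N - M) = volume (Set.Ioo M N) := Real.volume_Ioo.symm
          _ ≤ _ := measure_mono hsub2
    rw [hv, ENNReal.toReal_ofReal']
  -- derivatives of the moving endpoints
  have hadd : HasDerivAt (fun h : ℝ => θ + h) 1 0 := by
    simpa using (hasDerivAt_id (0:ℝ)).const_add θ
  have hcomp : ∀ k : Fin m, HasDerivAt (fun h : ℝ => p (θ + h) k) (p' k) 0 := by
    intro k
    have h2 : HasDerivAt (fun ξ => p ξ k) (p' k) (θ + 0) := by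
      rw [add_zero]; exact hderiv k
    simpa [Function.comp_def] using h2.comp (0:ℝ) hadd
  have hcA : HasDerivAt (fun h : ℝ => cdfA p (θ + h) j) (∑ k ∈ Finset.Iic j, p' k) 0 := by
    simp only [cdfA]
    exact HasDerivAt.fun_sum fun k _ => hcomp k
  have hcB : HasDerivAt (fun h : ℝ => cdfB p (θ + h) j) (∑ k ∈ Finset.Iio j, p' k) 0 := by
    simp only [cdfB]
    exact HasDerivAt.fun_sum fun k _ => hcomp k
  have hA0 : cdfA p (θ + 0) j = cdfA p θ j := by rw [add_zero]
  have hB0 : cdfB p (θ + 0) j = cdfB p θ j := by rw [add_zero]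
  -- abbreviations
  set a := cdfA p θ i with ha
  set b := cdfB p θ i with hb
  set c0 := cdfA p θ j with hc0
  set d0 := cdfB p θ j with hd0
  have hba : b < a := hBA θ hθI i
  have hdc : d0 < c0 := hBA θ hθI j
  -- bound on the candidate limits
  have hbound : ∀ s : Finset (Fin m), |∑ k ∈ s, p' k| ≤ ∑ l, |p' l| := by
    intro s
    calc |∑ k ∈ s, p' k| ≤ ∑ k ∈ s, |p' k| := Finset.abs_sum_le_sum_abs _ _
      _ ≤ ∑ l, |p' l| := Finset.sum_le_sum_of_subset_of_nonneg
          (Finset.subset_univ _) (fun k _ _ => abs_nonneg _)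
  have hsnn : (0:ℝ) ≤ ∑ l, |p' l| := Finset.sum_nonneg fun l _ => abs_nonneg _
  have hIooev : ∀ᶠ h in 𝓝[>] (0:ℝ), h ∈ Set.Ioo (0:ℝ) δ :=
    Ioo_mem_nhdsGT_of_mem ⟨le_refl _, hδ⟩
  -- main case split
  rcases lt_or_ge (min a c0 - max b d0) 0 with hneg | hge
  · -- the intervals stay apart: limit is 0
    refine ⟨0, ?_, Finset.sum_nonneg fun l _ => abs_nonneg _⟩
    have hgc : ContinuousAt (fun h : ℝ => min a (cdfA p (θ + h) j)
        - max b (cdfB p (θ + h) j)) 0 :=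
      ((continuousAt_const.min hcA.continuousAt).sub
        (continuousAt_const.max hcB.continuousAt))
    have hg0 : min a (cdfA p (θ + 0) j) - max b (cdfB p (θ + 0) j) < 0 := by
      rw [hA0, hB0]; exact hneg
    have hev : ∀ᶠ h in 𝓝 (0:ℝ), min a (cdfA p (θ + h) j)
        - max b (cdfB p (θ + h) j) < 0 :=
      hgc.eventually (eventually_lt_nhds hg0)
    apply Tendsto.congr' _ (tendsto_const_nhds (α := ℝ))
    filter_upwards [hIooev, hev.filter_mono nhdsWithin_le_nhds] with h h1 h2
    rw [hmeas h h1, max_eq_right h2.le, zero_div]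
  · -- the intervals touch: one-sided derivative appears
    have htouch : max b d0 ≤ min a c0 := by linarith
    rcases lt_or_gt_of_ne hij with hlt | hgt
    · -- i < j : necessarily a = d0
      have h1 : a ≤ d0 := hAltB θ hθI i j hlt
      have had : a = d0 :=
        le_antisymm h1 (le_trans (le_max_right b d0) (le_trans htouch (min_le_left _ _)))
      have hbd : b < d0 := had ▸ hba
      have hac : a < c0 := had ▸ hdc
      set dd := ∑ k ∈ Finset.Iio j, p' k with hdd
      refine ⟨max (-dd) 0, ?_, max_le ((neg_le_abs _).trans (hbound (Finset.Iio j))) hsnn⟩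
      -- slope of B_j tendsto dd
      have hslope : Tendsto (fun h : ℝ => (cdfB p (θ + h) j - cdfB p (θ + 0) j) / h)
          (𝓝[>] (0:ℝ)) (𝓝 dd) := by
        have h1 := (hasDerivAt_iff_tendsto_slope.mp hcB).mono_left
          (nhdsWithin_mono _ (fun x hx => ne_of_gt hx))
        apply h1.congr
        intro h
        rw [slope_def_field, sub_zero]
      have hac' : a < cdfA p (θ + 0) j := by rw [hA0]; exact hac
      have hbd' : b < cdfB p (θ + 0) j := by rw [hB0]; exact hbd
      have hevc : ∀ᶠ h in 𝓝[>] (0:ℝ), a < cdfA p (θ + h) j :=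
        ((hcA.continuousAt : Tendsto _ _ _).eventually
          (eventually_gt_nhds hac')).filter_mono nhdsWithin_le_nhds
      have hevd : ∀ᶠ h in 𝓝[>] (0:ℝ), b < cdfB p (θ + h) j :=
        ((hcB.continuousAt : Tendsto _ _ _).eventually
          (eventually_gt_nhds hbd')).filter_mono nhdsWithin_le_nhds
      apply Tendsto.congr' _ ((hslope.neg).max tendsto_const_nhds)
      filter_upwards [hIooev, hevc, hevd] with h h1 h2 h3
      rw [hmeas h h1, min_eq_left h2.le, max_eq_right h3.le,
        ← max_div_div_right h1.1.le, zero_div]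
      congr 1
      rw [hB0, ← had]
      ring
    · -- j < i : necessarily c0 = b
      have h1 : c0 ≤ b := hAltB θ hθI j i hgt
      have hcb : c0 = b :=
        le_antisymm h1 (le_trans (le_max_left b d0) (le_trans htouch (min_le_right _ _)))
      have hdb : d0 < b := hcb ▸ hdc
      have hca : c0 < a := hcb ▸ hba
      set cd := ∑ k ∈ Finset.Iic j, p' k with hcd
      refine ⟨max cd 0, ?_, max_le ((le_abs_self _).trans (hbound (Finset.Iic j))) hsnn⟩
      have hslope : Tendsto (fun h : ℝ => (cdfA p (θ + h) j - cdfA p (θ + 0) j) / h)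
          (𝓝[>] (0:ℝ)) (𝓝 cd) := by
        have h1 := (hasDerivAt_iff_tendsto_slope.mp hcA).mono_left
          (nhdsWithin_mono _ (fun x hx => ne_of_gt hx))
        apply h1.congr
        intro h
        rw [slope_def_field, sub_zero]
      have hca' : cdfA p (θ + 0) j < a := by rw [hA0]; exact hca
      have hdb' : cdfB p (θ + 0) j < b := by rw [hB0]; exact hdb
      have hevc : ∀ᶠ h in 𝓝[>] (0:ℝ), cdfA p (θ + h) j < a :=
        ((hcA.continuousAt : Tendsto _ _ _).eventually
          (eventually_lt_nhds hca')).filter_mono nhdsWithin_le_nhds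
      have hevd : ∀ᶠ h in 𝓝[>] (0:ℝ), cdfB p (θ + h) j < b :=
        ((hcB.continuousAt : Tendsto _ _ _).eventually
          (eventually_lt_nhds hdb')).filter_mono nhdsWithin_le_nhds
      apply Tendsto.congr' _ (hslope.max tendsto_const_nhds)
      filter_upwards [hIooev, hevc, hevd] with h h1 h2 h3
      rw [hmeas h h1, min_eq_right h2.le, max_eq_left h3.le,
        ← max_div_div_right h1.1.le, zero_div]
      congr 1
      rw [hA0, ← hcb]
end

section
/- Let m ≥ 1 and l ≥ 1, let 0 ≤ r_1 < r_2 < ... < r_l be real numbers, let Λ : {1,...,m} → {r_1,...,r_l}, let Q be an m×m real matrix, and let D = diag(Λ(1),...,Λ(m)). Let p : (0,∞) → ℝ^m be differentiable with p'(t) = Qᵀ p(t) for all t > 0. For each i ∈ {1,...,m} and each j ∈ {2,...,l} let G_{i,j} : (0,∞)×ℝ → ℝ be continuously differentiable, and assume the wave equation ∂_t G_{i,j}(t,x) = −Λ(i)·∂_x G_{i,j}(t,x) + Σ_{k=1}^m G_{k,j}(t,x)·Q_{ki} holds whenever t > 0 and r_{j−1}t ≤ x ≤ r_j t. For t > 0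 define boundary values along the rays x = r_j t by: L_{i,1}(t) = p_i(t); L_{i,j}(t) = G_{i,j}(t, r_j t) for 2 ≤ j ≤ l; R_{i,j}(t) = G_{i,j+1}(t, r_j t) for 1 ≤ j ≤ l−1; R_{i,l}(t) = 0. Assume L_{i,j}(t) = R_{i,j}(t) for all t > 0 whenever r_j ≠ Λ(i). Let j(i) be the index with r_{j(i)} = Λ(i), set J_i(t) = L_{i,j(i)}(t) − R_{i,j(i)}(t), and define β_i(t) = e^{−Λ(i)t}·J_i(t) − Σ_{j=2}^l ∫_{r_{j−1}t}^{r_j t} e^{−x}·∂_x G_{i,j}(t,x) dx. Then β = (β_1,...,β_m) is differentiable on (0,∞) and satisfies dβ(t)/dt = (Qᵀ − D)·β(t). -/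
open Matrix

open Matrix Set Filter MeasureTheory intervalIntegral



lemma ot_sliceCont {f : ℝ → ℝ → ℝ}
    (hf : ContinuousOn (fun q : ℝ × ℝ => f q.1 q.2) (Set.Ioi 0 ×ˢ Set.univ))
    {s : ℝ} (hs : 0 < s) : Continuous (fun x => f s x) := by
  rw [continuous_iff_continuousAt]
  intro x
  have hopen : IsOpen ((Set.Ioi (0:ℝ)) ×ˢ (Set.univ : Set ℝ)) := isOpen_Ioi.prod isOpen_univ
  have h1 : ContinuousAt (fun q : ℝ × ℝ => f q.1 q.2) (s, x) :=
    hf.continuousAt (hopen.mem_nhds ⟨hs, trivial⟩)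
  exact h1.comp ((continuous_const.prodMk continuous_id).continuousAt)

lemma ot_jointCont {f ft fx : ℝ → ℝ → ℝ}
    (hft : ∀ (x t : ℝ), 0 < t → HasDerivAt (fun s => f s x) (ft t x) t)
    (hfx : ∀ t : ℝ, 0 < t → ∀ x, HasDerivAt (fun y => f t y) (fx t x) x)
    (hftc : ContinuousOn (fun q : ℝ × ℝ => ft q.1 q.2) (Set.Ioi 0 ×ˢ Set.univ)) :
    ContinuousOn (fun q : ℝ × ℝ => f q.1 q.2) (Set.Ioi 0 ×ˢ Set.univ) := by
  intro q hq
  apply ContinuousAt.continuousWithinAt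
  obtain ⟨t0, x0⟩ := q
  have ht0 : 0 < t0 := hq.1
  have hKc : IsCompact ((Set.Icc (t0/2) (t0+1)) ×ˢ (Set.Icc (x0-1) (x0+1))) :=
    isCompact_Icc.prod isCompact_Icc
  have hKsub : ((Set.Icc (t0/2) (t0+1)) ×ˢ (Set.Icc (x0-1) (x0+1))) ⊆
      (Set.Ioi (0:ℝ)) ×ˢ (Set.univ : Set ℝ) := by
    rintro ⟨u, y⟩ ⟨hu, _⟩
    exact ⟨lt_of_lt_of_le (by linarith) hu.1, trivial⟩
  obtain ⟨M, hM⟩ := hKc.exists_bound_of_continuousOn (hftc.mono hKsub)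
  have h2 : Tendsto (fun q : ℝ × ℝ => f t0 q.2) (nhds (t0, x0)) (nhds (f t0 x0)) := by
    have hc : Continuous (fun y => f t0 y) := by
      rw [continuous_iff_continuousAt]
      exact fun y => (hfx t0 ht0 y).continuousAt
    exact (hc.comp continuous_snd).continuousAt
  have hbound : ∀ᶠ q : ℝ × ℝ in nhds (t0, x0),
      ‖f q.1 q.2 - f t0 q.2‖ ≤ M * |q.1 - t0| := by
    have hU : (Set.Ioo (t0/2) (t0+1)) ×ˢ (Set.Ioo (x0-1) (x0+1)) ∈ nhds (t0, x0) := by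
      apply (isOpen_Ioo.prod isOpen_Ioo).mem_nhds
      refine ⟨⟨by linarith, by linarith⟩, ⟨by linarith, by linarith⟩⟩
    filter_upwards [hU] with q hqU
    obtain ⟨s, x⟩ := q
    obtain ⟨hsU, hxU⟩ := hqU
    have hs : 0 < s := lt_trans (by linarith) hsU.1
    have hmin : t0/2 < min t0 s := lt_min (by linarith) hsU.1
    have hmax : max t0 s ≤ t0 + 1 := max_le (by linarith) hsU.2.le
    have hintegr : IntervalIntegrable (fun u => ft u x) MeasureTheory.volume t0 s := by
      have hcont : ContinuousOn (fun u => ft u x) (Set.Ioi 0) :=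
        hftc.comp ((continuous_id.prodMk continuous_const).continuousOn)
          (fun u hu => ⟨hu, trivial⟩)
      apply (hcont.mono ?_).intervalIntegrable
      intro u hu
      exact lt_of_lt_of_le (lt_trans (by linarith : (0:ℝ) < t0/2) hmin) hu.1
    have hFTC : (∫ u in t0..s, ft u x) = f s x - f t0 x := by
      apply intervalIntegral.integral_eq_sub_of_hasDerivAt
      · intro u hu
        exact hft x u (lt_of_lt_of_le (lt_trans (by linarith : (0:ℝ) < t0/2) hmin) hu.1)
      · exact hintegr
    rw [← hFTC]
    have := intervalIntegral.norm_integral_le_of_norm_le_const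
      (C := M) (f := fun u => ft u x) (a := t0) (b := s) ?_
    · calc ‖∫ u in t0..s, ft u x‖ ≤ M * |s - t0| := this
        _ = M * |(s, x).1 - t0| := by norm_num
    · intro u hu
      have hu1 : t0/2 ≤ u := le_of_lt (lt_trans hmin hu.1)
      have hu2 : u ≤ t0 + 1 := le_trans hu.2 hmax
      exact hM (u, x) ⟨⟨hu1, hu2⟩, ⟨hxU.1.le, hxU.2.le⟩⟩
  have h1 : Tendsto (fun q : ℝ × ℝ => f q.1 q.2 - f t0 q.2) (nhds (t0, x0)) (nhds 0) := by
    apply squeeze_zero_norm' hbound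
    have : Tendsto (fun q : ℝ × ℝ => M * |q.1 - t0|) (nhds (t0, x0)) (nhds (M * |t0 - t0|)) :=
      (Tendsto.const_mul M ((continuous_fst.sub continuous_const).abs).continuousAt)
    simpa using this
  have := h1.add h2
  simp only [sub_add_cancel, zero_add] at this
  exact this




lemma ot_sliver {f : ℝ → ℝ → ℝ}
    (hfc : ContinuousOn (fun q : ℝ × ℝ => f q.1 q.2) (Set.Ioi 0 ×ˢ Set.univ))
    (b t : ℝ) (ht : 0 < t) :
    HasDerivAt (fun s => ∫ x in (b*t)..(b*s), f s x) (b * f t (b*t)) t := by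
  rw [hasDerivAt_iff_isLittleO, Asymptotics.isLittleO_iff]
  intro c hc
  have hopen : IsOpen ((Set.Ioi (0:ℝ)) ×ˢ (Set.univ : Set ℝ)) := isOpen_Ioi.prod isOpen_univ
  have hcA : ContinuousAt (fun q : ℝ × ℝ => f q.1 q.2) (t, b*t) :=
    hfc.continuousAt (hopen.mem_nhds ⟨ht, trivial⟩)
  have hcpos : 0 < c / (|b| + 1) := by positivity
  obtain ⟨δ, hδpos, hδ⟩ := Metric.continuousAt_iff.1 hcA (c / (|b| + 1)) hcpos
  have hball : Metric.ball t (min (δ / (|b| + 1)) (t/2)) ∈ nhds t :=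
    Metric.ball_mem_nhds t (by positivity)
  filter_upwards [hball] with s hsball
  rw [Metric.mem_ball, Real.dist_eq] at hsball
  have hst : |s - t| < δ / (|b| + 1) := lt_of_lt_of_le hsball (min_le_left _ _)
  have hst2 : |s - t| < t/2 := lt_of_lt_of_le hsball (min_le_right _ _)
  have hs : 0 < s := by
    have := abs_lt.1 hst2; linarith [this.1]
  have hb1 : (0:ℝ) < |b| + 1 := by positivity
  have hint : IntervalIntegrable (fun x => f s x) MeasureTheory.volume (b*t) (b*s) :=
    (ot_sliceCont hfc hs).intervalIntegrable _ _
  have heq : (∫ x in (b*t)..(b*s), f s x) - (∫ x in (b*t)..(b*t), f t x) - (s - t) • (b * f t (b*t))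
      = ∫ x in (b*t)..(b*s), (f s x - f t (b*t)) := by
    rw [intervalIntegral.integral_same, intervalIntegral.integral_sub hint
      (intervalIntegrable_const), intervalIntegral.integral_const]
    simp only [smul_eq_mul]
    ring
  rw [heq]
  have hd : |b*s - b*t| = |b| * |s - t| := by
    rw [show b*s - b*t = b * (s - t) by ring, abs_mul]
  have hbnd : ∀ x ∈ Set.uIoc (b*t) (b*s), ‖f s x - f t (b*t)‖ ≤ c / (|b| + 1) := by
    intro x hx
    have hA : b*s - b*t ≤ |b*s - b*t| := le_abs_self _
    have hB : -(|b*s - b*t|) ≤ b*s - b*t := neg_abs_le _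
    have h1 : b*t - |b*s - b*t| ≤ x :=
      le_of_lt (lt_of_le_of_lt (le_min (by linarith) (by linarith)) hx.1)
    have h2 : x ≤ b*t + |b*s - b*t| := le_trans hx.2 (max_le (by linarith) (by linarith))
    have hx1 : |x - b*t| ≤ |b| * |s - t| := by
      rw [← hd]; exact abs_le.2 ⟨by linarith, by linarith⟩
    have hdist : dist (s, x) (t, b*t) < δ := by
      rw [Prod.dist_eq]
      apply max_lt
      · rw [Real.dist_eq]
        calc |s - t| < δ / (|b| + 1) := hst
          _ ≤ δ := by
            rw [div_le_iff₀ hb1]; nlinarith [abs_nonneg b]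
      · rw [Real.dist_eq]
        calc |x - b*t| ≤ |b| * |s - t| := hx1
          _ < |b| * (δ / (|b| + 1)) + δ / (|b| + 1) := by
            nlinarith [abs_nonneg b, abs_nonneg (s - t), mul_le_mul_of_nonneg_left hst.le (abs_nonneg b)]
          _ = δ := by field_simp
    have := hδ hdist
    rw [Real.dist_eq] at this
    exact this.le
  calc ‖∫ x in (b*t)..(b*s), (f s x - f t (b*t))‖
      ≤ c / (|b| + 1) * |b*s - b*t| :=
        intervalIntegral.norm_integral_le_of_norm_le_const hbnd
    _ = (c / (|b| + 1) * |b|) * |s - t| := by rw [hd]; ring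
    _ ≤ c * |s - t| := by
        apply mul_le_mul_of_nonneg_right _ (abs_nonneg _)
        rw [div_mul_eq_mul_div, div_le_iff₀ hb1]
        nlinarith [abs_nonneg b]
    _ = c * ‖s - t‖ := by rw [Real.norm_eq_abs]






lemma ot_param {f ft : ℝ → ℝ → ℝ}
    (hfc : ContinuousOn (fun q : ℝ × ℝ => f q.1 q.2) (Set.Ioi 0 ×ˢ Set.univ))
    (hftc : ContinuousOn (fun q : ℝ × ℝ => ft q.1 q.2) (Set.Ioi 0 ×ˢ Set.univ))
    (hd : ∀ (x u : ℝ), 0 < u → HasDerivAt (fun s => f s x) (ft u x) u)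
    (a b t : ℝ) (ht : 0 < t) :
    HasDerivAt (fun s => ∫ x in a..b, f s x) (∫ x in a..b, ft t x) t := by
  have hKc : IsCompact ((Set.Icc (t/2) (t + t/2)) ×ˢ (Set.uIcc a b)) :=
    isCompact_Icc.prod isCompact_uIcc
  have hKsub : ((Set.Icc (t/2) (t + t/2)) ×ˢ (Set.uIcc a b)) ⊆
      (Set.Ioi (0:ℝ)) ×ˢ (Set.univ : Set ℝ) := by
    rintro ⟨u, y⟩ ⟨hu, _⟩
    exact ⟨lt_of_lt_of_le (by linarith) hu.1, trivial⟩
  obtain ⟨M, hM⟩ := hKc.exists_bound_of_continuousOn (hftc.mono hKsub)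
  refine (intervalIntegral.hasDerivAt_integral_of_dominated_loc_of_deriv_le
    (F := fun s x => f s x) (F' := fun s x => ft s x) (bound := fun _ => M)
    (s := Metric.ball t (t/2)) (Metric.ball_mem_nhds t (by positivity)) ?_ ?_ ?_ ?_ ?_ ?_).2
  · filter_upwards [Ioi_mem_nhds ht] with s hs
    exact (ot_sliceCont hfc hs).aestronglyMeasurable.restrict
  · exact (ot_sliceCont hfc ht).intervalIntegrable _ _
  · exact (ot_sliceCont hftc ht).aestronglyMeasurable.restrict
  · apply MeasureTheory.ae_of_all
    intro x hx s hsball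
    rw [Metric.mem_ball, Real.dist_eq] at hsball
    have h := abs_lt.1 hsball
    exact hM (s, x) ⟨⟨by linarith, by linarith⟩, Set.uIoc_subset_uIcc hx⟩
  · exact intervalIntegrable_const
  · apply MeasureTheory.ae_of_all
    intro x hx s hsball
    rw [Metric.mem_ball, Real.dist_eq] at hsball
    have h := abs_lt.1 hsball
    exact hd x s (by linarith)

lemma ot_keyDeriv {f ft : ℝ → ℝ → ℝ}
    (hfc : ContinuousOn (fun q : ℝ × ℝ => f q.1 q.2) (Set.Ioi 0 ×ˢ Set.univ))
    (hftc : ContinuousOn (fun q : ℝ × ℝ => ft q.1 q.2) (Set.Ioi 0 ×ˢ Set.univ))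
    (hd : ∀ (x u : ℝ), 0 < u → HasDerivAt (fun s => f s x) (ft u x) u)
    (a b t : ℝ) (ht : 0 < t) :
    HasDerivAt (fun s => ∫ x in (a*s)..(b*s), f s x)
      (b * f t (b*t) - a * f t (a*t) + ∫ x in (a*t)..(b*t), ft t x) t := by
  have h1 : HasDerivAt (fun s => ∫ x in (a*t)..(b*t), f s x)
      (∫ x in (a*t)..(b*t), ft t x) t := ot_param hfc hftc hd (a*t) (b*t) t ht
  have h2 : HasDerivAt (fun s => ∫ x in (b*t)..(b*s), f s x) (b * f t (b*t)) t :=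
    ot_sliver hfc b t ht
  have h3 : HasDerivAt (fun s => ∫ x in (a*t)..(a*s), f s x) (a * f t (a*t)) t :=
    ot_sliver hfc a t ht
  have hcomb := (h1.add h2).sub h3
  have heq : (fun s => ∫ x in (a*s)..(b*s), f s x) =ᶠ[nhds t]
      (fun s => ((∫ x in (a*t)..(b*t), f s x) + ∫ x in (b*t)..(b*s), f s x) -
        ∫ x in (a*t)..(a*s), f s x) := by
    filter_upwards [Ioi_mem_nhds ht] with s hs
    have hint : ∀ u v : ℝ, IntervalIntegrable (fun x => f s x) MeasureTheory.volume u v :=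
      fun u v => (ot_sliceCont hfc hs).intervalIntegrable u v
    have e1 : (∫ x in (a*s)..(a*t), f s x) + (∫ x in (a*t)..(b*t), f s x)
        = ∫ x in (a*s)..(b*t), f s x :=
      intervalIntegral.integral_add_adjacent_intervals (hint _ _) (hint _ _)
    have e2 : (∫ x in (a*s)..(b*t), f s x) + (∫ x in (b*t)..(b*s), f s x)
        = ∫ x in (a*s)..(b*s), f s x :=
      intervalIntegral.integral_add_adjacent_intervals (hint _ _) (hint _ _)
    have e3 : (∫ x in (a*t)..(a*s), f s x) = -∫ x in (a*s)..(a*t), f s x :=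
      intervalIntegral.integral_symm _ _
    rw [← e2, ← e1, e3]
    ring
  have := hcomb.congr_of_eventuallyEq heq
  exact this.congr_deriv (by ring)








/-- **Proposition 4.1 (analytic form).**  `p` solves `p' = Qᵀ p` on `(0,∞)`; for
`2 ≤ j ≤ l`, `G i j` is continuously differentiable on `(0,∞)×ℝ` (with partial
derivatives `Gt i j`, `Gx i j`) and satisfies the wave equation
`∂ₜ G_{ij} = −Λ(i) ∂ₓ G_{ij} + Σ_k G_{kj} Q_{ki}` on the wedge
`r_{j−1} t ≤ x ≤ r_j t`.  With the boundary values `Lb`, `Rb` along the rays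
`x = r_j t`, which agree whenever `r_j ≠ Λ(i)`, and `jf i` the index with
`r_{jf i} = Λ(i)`, the vector
`β_i(t) = e^{−Λ(i)t}(Lb − Rb)(i, jf i, t) − Σ_{j=2}^{l} ∫_{r_{j−1}t}^{r_j t} e^{−x} ∂ₓG_{ij}(t,x) dx`
is differentiable on `(0,∞)` and satisfies `dβ/dt = (Qᵀ − D) β` with
`D = diag Λ`. -/
theorem occupation_time_laplace_ode
    (m l : ℕ) (hm : 1 ≤ m) (hl : 1 ≤ l)
    (r : ℕ → ℝ) (hr0 : 0 ≤ r 1)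
    (hrmono : ∀ j : ℕ, 1 ≤ j → j < l → r j < r (j + 1))
    (Λ : Fin m → ℝ) (Q : Matrix (Fin m) (Fin m) ℝ)
    (p : ℝ → Fin m → ℝ)
    (hp : ∀ t : ℝ, 0 < t → HasDerivAt p (Qᵀ.mulVec (p t)) t)
    (G Gt Gx : Fin m → ℕ → ℝ → ℝ → ℝ)
    (hGt : ∀ (i : Fin m) (j : ℕ), 2 ≤ j → j ≤ l → ∀ (x : ℝ) (t : ℝ), 0 < t →
      HasDerivAt (fun s => G i j s x) (Gt i j t x) t)
    (hGx : ∀ (i : Fin m) (j : ℕ), 2 ≤ j → j ≤ l → ∀ (t : ℝ), 0 < t → ∀ x : ℝ,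
      HasDerivAt (fun y => G i j t y) (Gx i j t x) x)
    (hGtcont : ∀ (i : Fin m) (j : ℕ), 2 ≤ j → j ≤ l →
      ContinuousOn (fun q : ℝ × ℝ => Gt i j q.1 q.2) (Set.Ioi 0 ×ˢ Set.univ))
    (hGxcont : ∀ (i : Fin m) (j : ℕ), 2 ≤ j → j ≤ l →
      ContinuousOn (fun q : ℝ × ℝ => Gx i j q.1 q.2) (Set.Ioi 0 ×ˢ Set.univ))
    (hPDE : ∀ (i : Fin m) (j : ℕ), 2 ≤ j → j ≤ l → ∀ t : ℝ, 0 < t → ∀ x : ℝ,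
      r (j - 1) * t ≤ x → x ≤ r j * t →
      Gt i j t x = -Λ i * Gx i j t x + ∑ k, G k j t x * Q k i)
    (Lb Rb : Fin m → ℕ → ℝ → ℝ)
    (hLb1 : ∀ (i : Fin m) (t : ℝ), Lb i 1 t = p t i)
    (hLb : ∀ (i : Fin m) (j : ℕ), 2 ≤ j → j ≤ l → ∀ t : ℝ,
      Lb i j t = G i j t (r j * t))
    (hRb : ∀ (i : Fin m) (j : ℕ), 1 ≤ j → j < l → ∀ t : ℝ,
      Rb i j t = G i (j + 1) t (r j * t))
    (hRbl : ∀ (i : Fin m) (t : ℝ), Rb i l t = 0)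
    (hmatch : ∀ (i : Fin m) (j : ℕ), 1 ≤ j → j ≤ l → r j ≠ Λ i →
      ∀ t : ℝ, 0 < t → Lb i j t = Rb i j t)
    (jf : Fin m → ℕ)
    (hjf : ∀ i, 1 ≤ jf i ∧ jf i ≤ l ∧ r (jf i) = Λ i) :
    ∀ t : ℝ, 0 < t →
      HasDerivAt
        (fun s : ℝ => fun i : Fin m =>
          Real.exp (-Λ i * s) * (Lb i (jf i) s - Rb i (jf i) s) -
          ∑ j ∈ Finset.Icc 2 l,
            ∫ x in (r (j - 1) * s)..(r j * s), Real.exp (-x) * Gx i j s x)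
        ((Qᵀ - Matrix.diagonal Λ).mulVec (fun i : Fin m =>
          Real.exp (-Λ i * t) * (Lb i (jf i) t - Rb i (jf i) t) -
          ∑ j ∈ Finset.Icc 2 l,
            ∫ x in (r (j - 1) * t)..(r j * t), Real.exp (-x) * Gx i j t x))
        t := by
  -- strict monotonicity of r on [1, l]
  have hmono : ∀ a b : ℕ, 1 ≤ a → a < b → b ≤ l → r a < r b := by
    have key : ∀ (d a : ℕ), 1 ≤ a → a + (d+1) ≤ l → r a < r (a + (d+1)) := by
      intro d
      induction d with
      | zero => intro a ha hle; simpa using hrmono a ha (by omega)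
      | succ n ih =>
        intro a ha hle
        have h1 : r a < r (a + (n+1)) := ih a ha (by omega)
        have h2 : r (a + (n+1)) < r (a + (n+1) + 1) := hrmono (a+(n+1)) (by omega) (by omega)
        have : a + (n+1) + 1 = a + (n+2) := by omega
        rw [this] at h2
        exact lt_trans h1 h2
    intro a b ha hab hbl
    have : b = a + ((b - a - 1) + 1) := by omega
    rw [this]
    exact key (b - a - 1) a ha (by omega)
  -- slice continuity helpers
  have cG : ∀ (k : Fin m) (j : ℕ), 2 ≤ j → j ≤ l → ∀ s : ℝ, 0 < s →
      Continuous (fun x => Real.exp (-x) * G k j s x) := by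
    intro k j h2 hjl s hs
    exact (Real.continuous_exp.comp continuous_neg).mul
      (continuous_iff_continuousAt.2 fun x => (hGx k j h2 hjl s hs x).continuousAt)
  have cGx : ∀ (k : Fin m) (j : ℕ), 2 ≤ j → j ≤ l → ∀ s : ℝ, 0 < s →
      Continuous (fun x => Real.exp (-x) * Gx k j s x) := by
    intro k j h2 hjl s hs
    exact (Real.continuous_exp.comp continuous_neg).mul
      (ot_sliceCont (hGxcont k j h2 hjl) hs)
  have contG : ∀ (k : Fin m) (j : ℕ), 2 ≤ j → j ≤ l →
      ContinuousOn (fun q : ℝ × ℝ => Real.exp (-q.2) * G k j q.1 q.2)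
        (Set.Ioi 0 ×ˢ Set.univ) := by
    intro k j h2 hjl
    exact (((Real.continuous_exp.comp continuous_neg).comp continuous_snd).continuousOn).mul
      (ot_jointCont (fun x u hu => hGt k j h2 hjl x u hu) (hGx k j h2 hjl)
        (hGtcont k j h2 hjl))
  have contGt : ∀ (k : Fin m) (j : ℕ), 2 ≤ j → j ≤ l →
      ContinuousOn (fun q : ℝ × ℝ => Real.exp (-q.2) * Gt k j q.1 q.2)
        (Set.Ioi 0 ×ˢ Set.univ) := by
    intro k j h2 hjl
    exact (((Real.continuous_exp.comp continuous_neg).comp continuous_snd).continuousOn).mul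
      (hGtcont k j h2 hjl)
  -- integration by parts
  have ibp : ∀ (k : Fin m) (j : ℕ), 2 ≤ j → j ≤ l → ∀ s : ℝ, 0 < s →
      (∫ x in (r (j - 1) * s)..(r j * s), Real.exp (-x) * Gx k j s x)
      = Real.exp (-(r j * s)) * G k j s (r j * s)
        - Real.exp (-(r (j - 1) * s)) * G k j s (r (j - 1) * s)
        + ∫ x in (r (j - 1) * s)..(r j * s), Real.exp (-x) * G k j s x := by
    intro k j h2 hjl s hs
    have hder : ∀ x : ℝ, HasDerivAt (fun y => Real.exp (-y) * G k j s y)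
        (Real.exp (-x) * Gx k j s x - Real.exp (-x) * G k j s x) x := by
      intro x
      have h1 : HasDerivAt (fun y : ℝ => Real.exp (-y)) (-Real.exp (-x)) x := by
        have h := (hasDerivAt_neg' x).exp
        convert h using 1
        ring
      have := h1.mul (hGx k j h2 hjl s hs x)
      exact this.congr_deriv (by ring)
    have hFTC := intervalIntegral.integral_eq_sub_of_hasDerivAt
      (f := fun y => Real.exp (-y) * G k j s y)
      (f' := fun x => Real.exp (-x) * Gx k j s x - Real.exp (-x) * G k j s x)
      (a := r (j - 1) * s) (b := r j * s)
      (fun x _ => hder x)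
      (((cGx k j h2 hjl s hs).sub (cG k j h2 hjl s hs)).intervalIntegrable _ _)
    rw [intervalIntegral.integral_sub ((cGx k j h2 hjl s hs).intervalIntegrable _ _)
      ((cG k j h2 hjl s hs).intervalIntegrable _ _)] at hFTC
    beta_reduce at hFTC
    linarith
  -- telescoping sum identity
  have tele : ∀ (k : Fin m) (w : ℕ → ℝ) (s : ℝ), 0 < s →
      (∑ j ∈ Finset.Icc 2 l, (w j * Lb k j s - w (j - 1) * Rb k (j - 1) s))
      = w (jf k) * (Lb k (jf k) s - Rb k (jf k) s) - w 1 * Lb k 1 s := by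
    intro k w s hs
    have hne : ∀ j ∈ Finset.Icc 1 l, j ≠ jf k → Lb k j s = Rb k j s := by
      intro j hj hjne
      rw [Finset.mem_Icc] at hj
      apply hmatch k j hj.1 hj.2 _ s hs
      obtain ⟨h1, h2, h3⟩ := hjf k
      rcases Nat.lt_or_ge j (jf k) with h | h
      · rw [← h3]; exact ne_of_lt (hmono j (jf k) hj.1 h h2)
      · have hgt : jf k < j := by omega
        rw [← h3]; exact ne_of_gt (hmono (jf k) j h1 hgt hj.2)
    have e1 : ∑ j ∈ Finset.Icc 2 l, w (j - 1) * Rb k (j - 1) s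
        = ∑ j ∈ Finset.Icc 1 l, w j * Rb k j s := by
      have hmap : Finset.Icc 2 l = (Finset.Icc 1 (l - 1)).map (addRightEmbedding 1) := by
        rw [Finset.map_add_right_Icc]
        congr 1
        omega
      rw [hmap, Finset.sum_map]
      have e1' : ∀ j ∈ Finset.Icc 1 (l - 1),
          w ((addRightEmbedding 1) j - 1) * Rb k ((addRightEmbedding 1) j - 1) s
          = w j * Rb k j s := by
        intro j _
        simp [addRightEmbedding_apply]
      rw [Finset.sum_congr rfl e1']
      have hins : Finset.Icc 1 l = insert l (Finset.Icc 1 (l - 1)) := by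
        ext j; simp only [Finset.mem_Icc, Finset.mem_insert]; omega
      rw [hins, Finset.sum_insert (by simp only [Finset.mem_Icc]; omega), hRbl k s]
      ring
    have e3 : ∑ j ∈ Finset.Icc 1 l, w j * Lb k j s
        = w 1 * Lb k 1 s + ∑ j ∈ Finset.Icc 2 l, w j * Lb k j s := by
      have hins : Finset.Icc 1 l = insert 1 (Finset.Icc 2 l) := by
        ext j; simp only [Finset.mem_Icc, Finset.mem_insert]; omega
      rw [hins, Finset.sum_insert (by simp only [Finset.mem_Icc]; omega)]
    have e4 : (∑ j ∈ Finset.Icc 1 l, w j * Lb k j s)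
        - (∑ j ∈ Finset.Icc 1 l, w j * Rb k j s)
        = w (jf k) * (Lb k (jf k) s - Rb k (jf k) s) := by
      rw [← Finset.sum_sub_distrib]
      rw [Finset.sum_eq_single_of_mem (jf k)
        (Finset.mem_Icc.2 ⟨(hjf k).1, (hjf k).2.1⟩)]
      · ring
      · intro j hj hjne
        rw [hne j hj hjne]; ring
    rw [Finset.sum_sub_distrib, e1]
    linarith [e3, e4]
  -- fundamental identity: β = B on (0, ∞)
  have identA : ∀ (k : Fin m) (s : ℝ), 0 < s →
      Real.exp (-Λ k * s) * (Lb k (jf k) s - Rb k (jf k) s) -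
        (∑ j ∈ Finset.Icc 2 l,
          ∫ x in (r (j - 1) * s)..(r j * s), Real.exp (-x) * Gx k j s x)
      = Real.exp (-(r 1 * s)) * p s k -
        ∑ j ∈ Finset.Icc 2 l,
          ∫ x in (r (j - 1) * s)..(r j * s), Real.exp (-x) * G k j s x := by
    intro k s hs
    have hsum : (∑ j ∈ Finset.Icc 2 l,
          ∫ x in (r (j - 1) * s)..(r j * s), Real.exp (-x) * Gx k j s x)
        = (∑ j ∈ Finset.Icc 2 l,
            ((fun jj => Real.exp (-(r jj * s))) j * Lb k j s
              - (fun jj => Real.exp (-(r jj * s))) (j - 1) * Rb k (j - 1) s))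
          + ∑ j ∈ Finset.Icc 2 l,
            ∫ x in (r (j - 1) * s)..(r j * s), Real.exp (-x) * G k j s x := by
      rw [← Finset.sum_add_distrib]
      apply Finset.sum_congr rfl
      intro j hj
      obtain ⟨h2, hjl⟩ := Finset.mem_Icc.1 hj
      have hRb' : G k j s (r (j - 1) * s) = Rb k (j - 1) s := by
        have h := hRb k (j - 1) (by omega) (by omega) s
        rw [show j - 1 + 1 = j from by omega] at h
        exact h.symm
      rw [ibp k j h2 hjl s hs, ← hLb k j h2 hjl s, hRb']
    rw [hsum, tele k (fun jj => Real.exp (-(r jj * s))) s hs, hLb1 k s]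
    have hjfk := (hjf k).2.2
    rw [hjfk, neg_mul]
    ring
  -- now the derivative
  intro t ht
  rw [hasDerivAt_pi]
  intro i
  have hderivInt : ∀ j ∈ Finset.Icc 2 l,
      HasDerivAt (fun s => ∫ x in (r (j - 1) * s)..(r j * s), Real.exp (-x) * G i j s x)
        (r j * (Real.exp (-(r j * t)) * G i j t (r j * t))
          - r (j - 1) * (Real.exp (-(r (j - 1) * t)) * G i j t (r (j - 1) * t))
          + ∫ x in (r (j - 1) * t)..(r j * t), Real.exp (-x) * Gt i j t x) t := by
    intro j hj
    obtain ⟨h2, hjl⟩ := Finset.mem_Icc.1 hj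
    exact ot_keyDeriv (contG i j h2 hjl) (contGt i j h2 hjl)
      (fun x u hu => HasDerivAt.const_mul (Real.exp (-x)) (hGt i j h2 hjl x u hu))
      (r (j - 1)) (r j) t ht
  have hsumD := HasDerivAt.sum hderivInt
  have hpi : HasDerivAt (fun s => p s i) ((Qᵀ.mulVec (p t)) i) t :=
    hasDerivAt_pi.1 (hp t ht) i
  have hexp1 : HasDerivAt (fun s : ℝ => Real.exp (-(r 1 * s)))
      (-(r 1) * Real.exp (-(r 1 * t))) t := by
    have h0 : HasDerivAt (fun s : ℝ => -(r 1 * s)) (-(r 1)) t := by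
      simpa [Pi.neg_def] using ((hasDerivAt_id t).const_mul (r 1)).neg
    have h := h0.exp
    convert h using 1
    ring
  have hfinal := ((hexp1.mul hpi).sub hsumD).congr_of_eventuallyEq
    (f₁ := fun s : ℝ =>
      Real.exp (-Λ i * s) * (Lb i (jf i) s - Rb i (jf i) s) -
      ∑ j ∈ Finset.Icc 2 l,
        ∫ x in (r (j - 1) * s)..(r j * s), Real.exp (-x) * Gx i j s x)
    (by
      filter_upwards [Ioi_mem_nhds ht] with s hs
      exact (identA i s hs).trans (by simp only [Pi.sub_apply, Pi.mul_apply, Finset.sum_apply]))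
  convert hfinal using 1
  
  obtain ⟨hjf1, hjf2, hjfr⟩ := hjf i
  set F : Fin m → ℝ := (fun k : Fin m =>
    Real.exp (-Λ k * t) * (Lb k (jf k) t - Rb k (jf k) t) -
      ∑ j ∈ Finset.Icc 2 l,
        ∫ x in (r (j - 1) * t)..(r j * t), Real.exp (-x) * Gx k j t x) with hF
  have hIdF : ∀ k : Fin m, F k
      = Real.exp (-(r 1 * t)) * p t k -
        ∑ j ∈ Finset.Icc 2 l,
          ∫ x in (r (j - 1) * t)..(r j * t), Real.exp (-x) * G k j t x := by
    intro k
    rw [hF]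
    exact identA k t ht
  have hFi : F i = Real.exp (-(Λ i * t)) * (Lb i (jf i) t - Rb i (jf i) t) -
      ∑ j ∈ Finset.Icc 2 l,
        ∫ x in (r (j - 1) * t)..(r j * t), Real.exp (-x) * Gx i j t x := by
    rw [hF]
    beta_reduce
    rw [neg_mul]
  have hmv : ((Qᵀ - Matrix.diagonal Λ) *ᵥ F) i = (∑ k, Q k i * F k) - Λ i * F i := by
    simp only [Matrix.mulVec, dotProduct, Matrix.sub_apply, Matrix.transpose_apply,
      Matrix.diagonal_apply, sub_mul, ite_mul, zero_mul, Finset.sum_sub_distrib]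
    congr 1
    rw [Finset.sum_ite_eq]
    simp
  have hmv2 : (Qᵀ *ᵥ p t) i = ∑ k, Q k i * p t k := by
    simp [Matrix.mulVec, dotProduct]
  have hQF : ∑ k, Q k i * F k
      = Real.exp (-(r 1 * t)) * (∑ k, Q k i * p t k)
        - ∑ k, Q k i * ∑ j ∈ Finset.Icc 2 l,
            ∫ x in (r (j - 1) * t)..(r j * t), Real.exp (-x) * G k j t x := by
    rw [Finset.mul_sum, ← Finset.sum_sub_distrib]
    exact Finset.sum_congr rfl fun k _ => by rw [hIdF k]; ring
  have hPDEint : ∀ j ∈ Finset.Icc 2 l,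
      (∫ x in (r (j - 1) * t)..(r j * t), Real.exp (-x) * Gt i j t x)
      = -Λ i * (∫ x in (r (j - 1) * t)..(r j * t), Real.exp (-x) * Gx i j t x)
        + ∑ k, Q k i * ∫ x in (r (j - 1) * t)..(r j * t), Real.exp (-x) * G k j t x := by
    intro j hj
    obtain ⟨h2, hjl⟩ := Finset.mem_Icc.1 hj
    have hab : r (j - 1) * t ≤ r j * t := by
      have h := hmono (j - 1) j (by omega) (by omega) hjl
      nlinarith
    have hcongr : (∫ x in (r (j - 1) * t)..(r j * t), Real.exp (-x) * Gt i j t x)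
        = ∫ x in (r (j - 1) * t)..(r j * t),
            (-Λ i * (Real.exp (-x) * Gx i j t x)
              + ∑ k, (Real.exp (-x) * G k j t x) * Q k i) := by
      apply intervalIntegral.integral_congr
      intro x hx
      rw [Set.uIcc_of_le hab] at hx
      beta_reduce
      rw [hPDE i j h2 hjl t ht x hx.1 hx.2, mul_add, Finset.mul_sum]
      congr 1
      · ring
      · exact Finset.sum_congr rfl fun k _ => by ring
    rw [hcongr, intervalIntegral.integral_add
        (f := fun x => -Λ i * (Real.exp (-x) * Gx i j t x))
        (g := fun x => ∑ k, Real.exp (-x) * G k j t x * Q k i)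
        ((continuous_const.mul (cGx i j h2 hjl t ht)).intervalIntegrable _ _)
        ((continuous_finset_sum _ fun k _ =>
          (cG k j h2 hjl t ht).mul continuous_const).intervalIntegrable _ _),
      intervalIntegral.integral_const_mul,
      intervalIntegral.integral_finset_sum
          (f := fun k x => Real.exp (-x) * G k j t x * Q k i)
        (fun k _ => ((cG k j h2 hjl t ht).mul continuous_const).intervalIntegrable _ _)]
    congr 1
    exact Finset.sum_congr rfl fun k _ => by
      rw [intervalIntegral.integral_mul_const]; ring
  have hbdry : ∑ j ∈ Finset.Icc 2 l,
      (r j * (Real.exp (-(r j * t)) * G i j t (r j * t))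
        - r (j - 1) * (Real.exp (-(r (j - 1) * t)) * G i j t (r (j - 1) * t)))
      = (r (jf i) * Real.exp (-(r (jf i) * t))) * (Lb i (jf i) t - Rb i (jf i) t)
        - (r 1 * Real.exp (-(r 1 * t))) * p t i := by
    have h := tele i (fun jj => r jj * Real.exp (-(r jj * t))) t ht
    rw [hLb1] at h
    rw [← h]
    apply Finset.sum_congr rfl
    intro j hj
    obtain ⟨h2, hjl⟩ := Finset.mem_Icc.1 hj
    have hRb' : G i j t (r (j - 1) * t) = Rb i (j - 1) t := by
      have hh := hRb i (j - 1) (by omega) (by omega) t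
      rw [show j - 1 + 1 = j from by omega] at hh
      exact hh.symm
    rw [← hLb i j h2 hjl t, hRb']
    ring
  have hswap : ∑ j ∈ Finset.Icc 2 l, ∑ k,
        Q k i * ∫ x in (r (j - 1) * t)..(r j * t), Real.exp (-x) * G k j t x
      = ∑ k, Q k i * ∑ j ∈ Finset.Icc 2 l,
          ∫ x in (r (j - 1) * t)..(r j * t), Real.exp (-x) * G k j t x := by
    rw [Finset.sum_comm]
    exact Finset.sum_congr rfl fun k _ => (Finset.mul_sum _ _ _).symm
  have hsum2 : ∑ j ∈ Finset.Icc 2 l,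
      (r j * (Real.exp (-(r j * t)) * G i j t (r j * t))
        - r (j - 1) * (Real.exp (-(r (j - 1) * t)) * G i j t (r (j - 1) * t))
        + ∫ x in (r (j - 1) * t)..(r j * t), Real.exp (-x) * Gt i j t x)
      = ((r (jf i) * Real.exp (-(r (jf i) * t))) * (Lb i (jf i) t - Rb i (jf i) t)
          - (r 1 * Real.exp (-(r 1 * t))) * p t i)
        + (-Λ i * ∑ j ∈ Finset.Icc 2 l,
              (∫ x in (r (j - 1) * t)..(r j * t), Real.exp (-x) * Gx i j t x)
           + ∑ k, Q k i * ∑ j ∈ Finset.Icc 2 l,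
              ∫ x in (r (j - 1) * t)..(r j * t), Real.exp (-x) * G k j t x) := by
    rw [Finset.sum_add_distrib, hbdry]
    congr 1
    rw [Finset.sum_congr rfl hPDEint, Finset.sum_add_distrib, ← Finset.mul_sum, hswap]
  rw [hmv, hmv2, hQF, hFi, hsum2, hjfr]
  ring
end
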